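/- The set of real numbers of the form ε(σ) = Σ_{n≥1} σ_n/2^n where σ ∈ {0,1}^∞ is eventually periodic of the form τ(01)^∞ for some finite binary word τ, equals (𝒟/3 \ 𝒟) ∩ (0,1], where 𝒟 is the set of positive dyadic rationals. Moreover, ε is injective on the set of such eventually-(01)-periodic sequences. -/

import Mathlib

/-- Binary evaluation map `ε(σ) = Σ_{n≥1} σ_n / 2^n` (here `σ k` is the digit
`σ_{k+1}` of the paper). -/
noncomputable def binEval (σ : ℕ → ℕ) : ℝ := ∑' k : ℕ, (σ k : ℝ) / 2 ^ (k + 1)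

/-- Binary sequences that are eventually of the form `τ(01)^∞`. -/
def evPer01 : Set (ℕ → ℕ) :=
  {σ | (∀ n, σ n ≤ 1) ∧
    ∃ m : ℕ, ∀ k : ℕ, σ (m + 2 * k) = 0 ∧ σ (m + 2 * k + 1) = 1}

/-- The positive dyadic rationals. -/
def dyadicPos : Set ℝ := {x | ∃ j n : ℕ, 0 < j ∧ x = (j : ℝ) / 2 ^ n}


lemma summable_binEval {σ : ℕ → ℕ} (h : ∀ n, σ n ≤ 1) :
    Summable (fun k => (σ k : ℝ) / 2 ^ (k + 1)) := by
  have hs : Summable fun k : ℕ => ((1:ℝ)/2)^k :=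
    summable_geometric_of_lt_one (by norm_num) (by norm_num)
  refine Summable.of_nonneg_of_le (fun k => by positivity) (fun k => ?_) hs
  have hk := h k
  have h1 : (σ k : ℝ) ≤ 1 := by exact_mod_cast hk
  have h2 : ((1:ℝ)/2)^k = 1 / 2^k := by rw [div_pow]; norm_num
  rw [h2]
  rw [div_le_div_iff₀ (by positivity) (by positivity)]
  have hp : (0:ℝ) < 2 ^ k := by positivity
  nlinarith [pow_succ (2:ℝ) k]

lemma tail_third {σ : ℕ → ℕ} (m : ℕ)
    (hm : ∀ k, σ (m + 2 * k) = 0 ∧ σ (m + 2 * k + 1) = 1) :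
    ∑' k : ℕ, (σ (k + m) : ℝ) / 2 ^ (k + m + 1) = (1/3) * (1/2)^m := by
  set f : ℕ → ℝ := fun k => (σ (k + m) : ℝ) / 2 ^ (k + m + 1) with hf
  have he : ∀ k, f (2 * k) = 0 := by
    intro k
    have := (hm k).1
    simp only [hf]
    rw [show 2 * k + m = m + 2 * k by ring, this]
    simp
  have ho : ∀ k, f (2 * k + 1) = ((1/2:ℝ)^m * (1/4)) * (1/4)^k := by
    intro k
    have := (hm k).2
    simp only [hf]
    rw [show 2 * k + 1 + m = m + 2 * k + 1 by ring, this]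
    rw [show m + 2*k+1+1 = (m+2) + 2*k by ring, pow_add, pow_mul]
    push_cast
    rw [div_pow, one_pow, div_pow, one_pow]
    field_simp
    ring
  have hse : Summable fun k => f (2 * k) := by simp [he]
  have hso : Summable fun k => f (2 * k + 1) := by
    simp only [ho]
    exact (summable_geometric_of_lt_one (by norm_num) (by norm_num)).mul_left _
  have := tsum_even_add_odd hse hso
  rw [tsum_congr he, tsum_congr ho] at this
  rw [tsum_zero, tsum_mul_left, tsum_geometric_of_lt_one (by norm_num) (by norm_num)] at this
  rw [← this]
  norm_num
  ring

lemma binEval_eq {σ : ℕ → ℕ} (h1 : ∀ n, σ n ≤ 1) (m : ℕ)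
    (hm : ∀ k, σ (m + 2 * k) = 0 ∧ σ (m + 2 * k + 1) = 1) :
    binEval σ = (∑ i ∈ Finset.range m, (σ i : ℝ) / 2 ^ (i + 1)) + (1/3) * (1/2)^m := by
  have hs := summable_binEval h1
  rw [binEval, ← hs.sum_add_tsum_nat_add m, tail_third m hm]

lemma geom_half (m : ℕ) : ∑ i ∈ Finset.range m, ((1:ℝ)/2)^(i+1) = 1 - (1/2)^m := by
  induction m with
  | zero => simp
  | succ n ih => rw [Finset.sum_range_succ, ih]; ring

lemma digits_recon : ∀ n a : ℕ, a < 2^n →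
    ∑ i ∈ Finset.range n, (a / 2^i % 2) * 2^i = a := by
  intro n
  induction n with
  | zero => intro a ha; interval_cases a <;> simp
  | succ n ih =>
    intro a ha
    rw [Finset.sum_range_succ']
    have h1 : ∀ i, a / 2^(i+1) = (a/2) / 2^i := by
      intro i; rw [pow_succ']; rw [Nat.div_div_eq_div_mul]
    have h2 : ∑ i ∈ Finset.range n, (a / 2^(i+1) % 2) * 2^(i+1)
        = 2 * ∑ i ∈ Finset.range n, ((a/2) / 2^i % 2) * 2^i := by
      rw [Finset.mul_sum]
      apply Finset.sum_congr rfl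
      intro i _
      rw [h1 i, pow_succ]
      ring
    have hlt : a / 2 < 2 ^ n := by
      have : 2 ^ (n+1) = 2 * 2 ^ n := by rw [pow_succ]; ring
      omega
    rw [h2, ih (a/2) hlt]
    simp
    omega

lemma head_frac (σ : ℕ → ℕ) (m : ℕ) :
    ∑ i ∈ Finset.range m, (σ i : ℝ) / 2 ^ (i + 1)
      = ((∑ i ∈ Finset.range m, σ i * 2 ^ (m - 1 - i) : ℕ) : ℝ) / 2 ^ m := by
  push_cast
  rw [Finset.sum_div]
  apply Finset.sum_congr rfl
  intro i hi
  have hi' : i < m := Finset.mem_range.mp hi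
  have hpow : (2:ℝ) ^ (m - 1 - i) * 2 ^ (i + 1) = 2 ^ m := by
    rw [← pow_add]; congr 1; omega
  rw [div_eq_div_iff (by positivity) (by positivity), mul_assoc, hpow]

lemma head_le (σ : ℕ → ℕ) (h1 : ∀ n, σ n ≤ 1) (m : ℕ) :
    ∑ i ∈ Finset.range m, (σ i : ℝ) / 2 ^ (i + 1) ≤ 1 - (1/2)^m := by
  rw [← geom_half m]
  apply Finset.sum_le_sum
  intro i _
  have : (σ i : ℝ) ≤ 1 := by exact_mod_cast h1 i
  rw [div_pow, one_pow, div_le_div_iff₀ (by positivity) (by positivity), pow_succ]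
  nlinarith [pow_pos (show (0:ℝ) < 2 by norm_num) i]

lemma digits_recon_real {n a : ℕ} (ha : a < 2 ^ n) :
    ∑ j ∈ Finset.range n, ((a / 2 ^ (n - 1 - j) % 2 : ℕ) : ℝ) / 2 ^ (j + 1)
      = (a : ℝ) / 2 ^ n := by
  have step1 : ∑ j ∈ Finset.range n, ((a / 2 ^ (n - 1 - j) % 2 : ℕ) : ℝ) / 2 ^ (j + 1)
      = ∑ j ∈ Finset.range n,
        (fun j => ((a / 2 ^ j % 2 : ℕ) : ℝ) * 2 ^ j / 2 ^ n) (n - 1 - j) := by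
    apply Finset.sum_congr rfl
    intro j hj
    have hj' : j < n := Finset.mem_range.mp hj
    simp only
    rw [div_eq_div_iff (by positivity) (by positivity), mul_assoc, ← pow_add]
    have : n - 1 - j + (j + 1) = n := by omega
    rw [this]
  rw [step1, Finset.sum_range_reflect (fun j => ((a / 2 ^ j % 2 : ℕ) : ℝ) * 2 ^ j / 2 ^ n) n]
  have : ∑ j ∈ Finset.range n, ((a / 2 ^ j % 2 : ℕ) : ℝ) * 2 ^ j / 2 ^ n
      = ((∑ j ∈ Finset.range n, a / 2 ^ j % 2 * 2 ^ j : ℕ) : ℝ) / 2 ^ n := by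
    push_cast
    rw [Finset.sum_div]
  rw [this, digits_recon n a ha]

lemma forward {σ : ℕ → ℕ} (hσ : σ ∈ evPer01) :
    binEval σ ∈ ((fun x => x / 3) '' dyadicPos \ dyadicPos) ∩ Set.Ioc 0 1 := by
  obtain ⟨h1, m, hm⟩ := hσ
  set N : ℕ := ∑ i ∈ Finset.range m, σ i * 2 ^ (m - 1 - i) with hN
  have heval : binEval σ = ((3 * N + 1 : ℕ) : ℝ) / 2 ^ m / 3 := by
    rw [binEval_eq h1 m hm, head_frac σ m, ← hN]
    push_cast
    field_simp
    rw [← mul_pow, one_div, mul_inv_cancel₀ (by norm_num : (2:ℝ) ≠ 0), one_pow]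
  constructor
  · constructor
    · exact ⟨((3 * N + 1 : ℕ) : ℝ) / 2 ^ m, ⟨3 * N + 1, m, by omega, rfl⟩, heval.symm⟩
    · rintro ⟨j, n, hj, hx⟩
      rw [heval] at hx
      field_simp at hx
      have h3 : (3 * N + 1) * 2 ^ n = j * (2 ^ m * 3) := by rw [Nat.mul_comm j]; exact_mod_cast hx
      have hdvd : 3 ∣ (3 * N + 1) * 2 ^ n := ⟨j * 2 ^ m, by rw [h3]; ring⟩
      have hcop : Nat.Coprime 3 (2 ^ n) := Nat.Coprime.pow_right n (by norm_num)
      have := (Nat.Coprime.dvd_of_dvd_mul_right hcop hdvd)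
      omega
  · constructor
    · rw [heval]; positivity
    · rw [binEval_eq h1 m hm]
      have := head_le σ h1 m
      have hp : (0:ℝ) < (1/2)^m := by positivity
      linarith

lemma backward {x : ℝ}
    (hx : x ∈ ((fun x => x / 3) '' dyadicPos \ dyadicPos) ∩ Set.Ioc 0 1) :
    ∃ σ ∈ evPer01, binEval σ = x := by
  obtain ⟨⟨⟨d, ⟨j, n, hj, rfl⟩, rfl⟩, hnd⟩, hx1, hx2⟩ := hx
  -- 3 does not divide j
  have h3j : ¬ (3 ∣ j) := by
    rintro ⟨t, rfl⟩
    exact hnd ⟨t, n, by omega, by push_cast; field_simp⟩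
  -- normalize so that j % 3 = 1
  obtain ⟨j', n', hmod, hxeq⟩ : ∃ j' n' : ℕ, j' % 3 = 1 ∧
      (j : ℝ) / 2 ^ n / 3 = (j' : ℝ) / 2 ^ n' / 3 := by
    have hcase : j % 3 = 0 ∨ j % 3 = 1 ∨ j % 3 = 2 := by omega
    rcases hcase with h | h | h
    · exact absurd (Nat.dvd_of_mod_eq_zero h) h3j
    · exact ⟨j, n, h, rfl⟩
    · refine ⟨2 * j, n + 1, by omega, ?_⟩
      push_cast
      rw [pow_succ]
      field_simp
  have hx2' : (j : ℝ) / 2 ^ n / 3 ≤ 1 := hx2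
  show ∃ σ ∈ evPer01, binEval σ = (j : ℝ) / 2 ^ n / 3
  rw [hxeq] at hx2' ⊢
  clear hx1 hx2
  -- bound on j'
  have hj'pos : 0 < j' := by omega
  have hle : (j' : ℝ) ≤ 3 * 2 ^ n' := by
    rw [div_le_one (by norm_num), div_le_iff₀ (by positivity)] at hx2'
    linarith
  have hlen : j' ≤ 3 * 2 ^ n' := by exact_mod_cast hle
  set a : ℕ := (j' - 1) / 3 with hadef
  have hja : j' = 3 * a + 1 := by omega
  have haltp : a < 2 ^ n' := by
    have h2 : 0 < 2 ^ n' := Nat.pow_pos (by norm_num)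
    omega
  refine ⟨fun i => if i < n' then a / 2 ^ (n' - 1 - i) % 2 else (i - n') % 2, ⟨?_, n', ?_⟩, ?_⟩
  · intro i
    by_cases h : i < n' <;> simp [h] <;> omega
  · intro k
    constructor
    · have h1 : ¬ (n' + 2 * k < n') := by omega
      simp only [if_neg h1]
      omega
    · have h1 : ¬ (n' + 2 * k + 1 < n') := by omega
      simp only [if_neg h1]
      omega
  · have h1 : ∀ i, (if i < n' then a / 2 ^ (n' - 1 - i) % 2 else (i - n') % 2) ≤ 1 := by
      intro i; by_cases h : i < n' <;> simp [h] <;> omega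
    have hm : ∀ k, (fun i => if i < n' then a / 2 ^ (n' - 1 - i) % 2 else (i - n') % 2) (n' + 2*k) = 0
        ∧ (fun i => if i < n' then a / 2 ^ (n' - 1 - i) % 2 else (i - n') % 2) (n' + 2*k+1) = 1 := by
      intro k
      constructor
      · have hh : ¬ (n' + 2 * k < n') := by omega
        simp only [if_neg hh]; omega
      · have hh : ¬ (n' + 2 * k + 1 < n') := by omega
        simp only [if_neg hh]; omega
    rw [binEval_eq h1 n' hm]
    have hhead : ∑ i ∈ Finset.range n', ((if i < n' then a / 2 ^ (n' - 1 - i) % 2 else (i - n') % 2 : ℕ) : ℝ) / 2 ^ (i + 1)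
        = (a : ℝ) / 2 ^ n' := by
      rw [← digits_recon_real haltp]
      apply Finset.sum_congr rfl
      intro i hi
      have : i < n' := Finset.mem_range.mp hi
      simp [this]
    rw [hhead, hja]
    push_cast
    field_simp
    rw [← mul_pow, one_div, mul_inv_cancel₀ (by norm_num : (2:ℝ) ≠ 0), one_pow]

lemma key_lt {σ τ : ℕ → ℕ} (hσ1 : ∀ i, σ i ≤ 1) (hτ : τ ∈ evPer01) (n : ℕ)
    (heq : ∀ i < n, σ i = τ i) (hsn : σ n = 1) (htn : τ n = 0) :
    binEval τ < binEval σ := by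
  obtain ⟨hτ1, m, hm⟩ := hτ
  have hsσ := summable_binEval hσ1
  have hsτ := summable_binEval hτ1
  unfold binEval
  rw [← hsσ.sum_add_tsum_nat_add (n+1), ← hsτ.sum_add_tsum_nat_add (n+1)]
  have hheads : ∑ i ∈ Finset.range (n+1), (σ i : ℝ) / 2 ^ (i+1)
      = (∑ i ∈ Finset.range (n+1), (τ i : ℝ) / 2 ^ (i+1)) + (1/2)^(n+1) := by
    rw [Finset.sum_range_succ, Finset.sum_range_succ, hsn, htn]
    have : ∑ i ∈ Finset.range n, (σ i : ℝ) / 2 ^ (i+1)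
        = ∑ i ∈ Finset.range n, (τ i : ℝ) / 2 ^ (i+1) := by
      apply Finset.sum_congr rfl
      intro i hi
      rw [heq i (Finset.mem_range.mp hi)]
    rw [this, div_pow, one_pow]
    push_cast
    ring
  have htailσ : 0 ≤ ∑' k : ℕ, (σ (k + (n+1)) : ℝ) / 2 ^ (k + (n+1) + 1) :=
    tsum_nonneg (fun k => by positivity)
  have htailτ : ∑' k : ℕ, (τ (k + (n+1)) : ℝ) / 2 ^ (k + (n+1) + 1) < (1/2)^(n+1) := by
    have hg : Summable fun k : ℕ => ((1:ℝ)/2)^(k + n + 2) := by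
      have : (fun k : ℕ => ((1:ℝ)/2)^(k + n + 2)) = fun k => ((1:ℝ)/2)^(n+2) * ((1:ℝ)/2)^k := by
        funext k; rw [← pow_add]; congr 1; omega
      rw [this]
      exact (summable_geometric_of_lt_one (by norm_num) (by norm_num)).mul_left _
    have hgsum : ∑' k : ℕ, ((1:ℝ)/2)^(k + n + 2) = (1/2)^(n+1) := by
      have : (fun k : ℕ => ((1:ℝ)/2)^(k + n + 2)) = fun k => ((1:ℝ)/2)^(n+2) * ((1:ℝ)/2)^k := by
        funext k; rw [← pow_add]; congr 1; omega
      rw [this, tsum_mul_left, tsum_geometric_of_lt_one (by norm_num) (by norm_num)]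
      norm_num
      ring
    rw [← hgsum]
    have hfτ : Summable fun k : ℕ => (τ (k + (n+1)) : ℝ) / 2 ^ (k + (n+1) + 1) :=
      (summable_nat_add_iff (f := fun k => (τ k : ℝ) / 2 ^ (k+1)) (n+1)).mpr hsτ
    have hle : ∀ k : ℕ, (τ (k + (n+1)) : ℝ) / 2 ^ (k + (n+1) + 1) ≤ ((1:ℝ)/2)^(k + n + 2) := by
      intro k
      have h1 : (τ (k + (n+1)) : ℝ) ≤ 1 := by exact_mod_cast hτ1 _
      have h2 : ((1:ℝ)/2)^(k+n+2) = 1 / 2^(k+(n+1)+1) := by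
        have he : k + n + 2 = k + (n+1) + 1 := by omega
        rw [he, div_pow, one_pow]
      rw [h2]
      gcongr
    have hstrict : (τ ((m+n+1) + (n+1)) : ℝ) / 2 ^ ((m+n+1) + (n+1) + 1) < ((1:ℝ)/2)^((m+n+1) + n + 2) := by
      have h0 : τ (m + n + 1 + (n + 1)) = 0 := by
        have := (hm (n+1)).1
        rw [show m + n + 1 + (n+1) = m + 2 * (n+1) by ring]
        exact this
      rw [h0]
      have hz : ((0:ℕ):ℝ) / 2 ^ (m+n+1 + (n+1) + 1) = 0 := by norm_num
      rw [hz]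
      positivity
    exact Summable.tsum_lt_tsum hle hstrict hfτ hg
  linarith

/-- The values of `ε` on eventually-`(01)`-periodic sequences are exactly
`(𝒟/3 \ 𝒟) ∩ (0,1]`, and `ε` is injective on this set of sequences. -/
theorem pd_eval_per01 :
    binEval '' evPer01
        = ((fun x => x / 3) '' dyadicPos \ dyadicPos) ∩ Set.Ioc 0 1 ∧
      Set.InjOn binEval evPer01 := by
  constructor
  · ext x
    constructor
    · rintro ⟨σ, hσ, rfl⟩
      exact forward hσ
    · intro hx
      obtain ⟨σ, hσ, h⟩ := backward hx
      exact ⟨σ, hσ, h⟩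
  · intro σ hσ τ hτ h
    by_contra hne
    have hex : ∃ n, σ n ≠ τ n := by
      by_contra h'
      push_neg at h'
      exact hne (funext h')
    set n := Nat.find hex with hn
    have hspec : σ n ≠ τ n := Nat.find_spec hex
    have hmin : ∀ i < n, σ i = τ i := fun i hi => not_not.mp (Nat.find_min hex hi)
    have hσn := hσ.1 n
    have hτn := hτ.1 n
    rcases (show σ n = 1 ∧ τ n = 0 ∨ σ n = 0 ∧ τ n = 1 by omega) with ⟨h1, h0⟩ | ⟨h0, h1⟩
    · exact absurd h (ne_of_lt (key_lt hσ.1 hτ n hmin h1 h0)).symm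
    · exact absurd h (ne_of_lt (key_lt (σ := τ) (τ := σ) hτ.1 hσ n (fun i hi => (hmin i hi).symm) h1 h0))
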